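/- For each integer k ≥ 0, the writhe polynomial of the virtual knot L_k (whose Gauss diagram consists of one positive chord intersected from one side by k parallel chords, as in Figure 15/16 of the paper) equals t^k + k·t^{−1} − (k+1), computed directly from its Gauss diagram. In particular W_{L_k}(1) = 0 and W_{L_k}'(1) = 0. -/

import Mathlib

open Finset LaurentPolynomial

/-- A Gauss diagram, abstracted as a finite set of signed chords together with the
asymmetric relation `ltr d c` : "chord `d` crosses chord `c` from left to right"
(so `ltr c d` means `d` crosses `c` from right to left). -/
structure GaussDiagram where
  Chord : Type
  [instFintype : Fintype Chord]
  [instDecEq : DecidableEq Chord]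
  w : Chord → ℤ
  sign : ∀ c, w c = 1 ∨ w c = -1
  ltr : Chord → Chord → Prop
  [instDecRel : DecidableRel ltr]
  irrefl : ∀ c, ¬ ltr c c
  asymm : ∀ c d, ltr c d → ¬ ltr d c

attribute [instance] GaussDiagram.instFintype GaussDiagram.instDecEq GaussDiagram.instDecRel

/-- The chord index `Ind c = r₊(c) − r₋(c) − l₊(c) + l₋(c)`. -/
def GaussDiagram.Ind (G : GaussDiagram) (c : G.Chord) : ℤ :=
  (∑ d ∈ univ.filter (fun d => G.ltr d c), G.w d)
    - (∑ d ∈ univ.filter (fun d => G.ltr c d), G.w d)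

/-- The writhe polynomial `W_G(t) = ∑_c w(c) t^{Ind(c)} − ∑_c w(c)`. -/
noncomputable def GaussDiagram.W (G : GaussDiagram) : LaurentPolynomial ℤ :=
  (∑ c, C (G.w c) * T (G.Ind c)) - C (∑ c, G.w c)

/-- Evaluation of a Laurent polynomial at `t = 1` (the sum of its coefficients). -/
def evalOne (f : LaurentPolynomial ℤ) : ℤ := f.coeff.sum fun _ a => a

/-- Evaluation of the formal derivative of a Laurent polynomial at `t = 1`. -/
def derivOne (f : LaurentPolynomial ℤ) : ℤ := f.coeff.sum fun n a => n * a


/-- The Gauss diagram of the virtual knot `L_k`: one chord `c₀ = 0` of sign `+1`,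
crossed from left to right by `k` pairwise disjoint chords, each of sign `+1`. -/
def Lk (k : ℕ) : GaussDiagram where
  Chord := Fin (k + 1)
  w _ := 1
  sign _ := Or.inl rfl
  ltr d c := c = 0 ∧ d ≠ 0
  instDecRel := fun _ _ => instDecidableAnd
  irrefl c h := h.2 h.1
  asymm c d h h' := h'.2 h.1

/-! Both evaluations at `t = 1` vanish for every Gauss diagram: `W(1) = ∑ w(c) − ∑ w(c)`, and
`W'(1) = ∑_c w(c) Ind(c)` is a sum of `w(c) w(d)` over ordered crossing pairs in which each
pair occurs once with each sign. For `L_k` the chord `c₀` has index `k` and each of the `k`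
other chords has index `−1`. -/

lemma evalOne_add (f g : LaurentPolynomial ℤ) : evalOne (f + g) = evalOne f + evalOne g :=
  Finsupp.sum_add_index' (fun _ => rfl) (fun _ _ _ => rfl)

lemma derivOne_add (f g : LaurentPolynomial ℤ) : derivOne (f + g) = derivOne f + derivOne g :=
  Finsupp.sum_add_index' mul_zero mul_add

noncomputable def evalOneHom : LaurentPolynomial ℤ →+ ℤ := AddMonoidHom.mk' evalOne evalOne_add

noncomputable def derivOneHom : LaurentPolynomial ℤ →+ ℤ := AddMonoidHom.mk' derivOne derivOne_add

lemma evalOne_C_mul_T (a n : ℤ) : evalOne (C a * T n) = a := by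
  rw [← single_eq_C_mul_T]
  exact Finsupp.sum_single_index rfl

lemma derivOne_C_mul_T (a n : ℤ) : derivOne (C a * T n) = n * a := by
  rw [← single_eq_C_mul_T]
  exact Finsupp.sum_single_index (mul_zero n)

lemma C_eq_C_mul_T_zero (a : ℤ) : (C a : LaurentPolynomial ℤ) = C a * T 0 := by
  rw [T_zero, mul_one]

namespace GaussDiagram

variable (G : GaussDiagram)

theorem sum_Ind_mul_w : ∑ c, G.Ind c * G.w c = 0 := by
  simp only [Ind, sub_mul, Finset.sum_sub_distrib, Finset.sum_mul, Finset.sum_filter, ite_mul,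
    zero_mul]
  rw [Finset.sum_comm, sub_eq_zero]
  exact Finset.sum_congr rfl fun _ _ => Finset.sum_congr rfl fun _ _ => by rw [mul_comm]

theorem evalOne_W : evalOne G.W = 0 := by
  change evalOneHom G.W = 0
  rw [W, map_sub, map_sum, C_eq_C_mul_T_zero]
  simp only [evalOneHom, AddMonoidHom.mk'_apply, evalOne_C_mul_T, sub_self]

theorem derivOne_W : derivOne G.W = 0 := by
  change derivOneHom G.W = 0
  rw [W, map_sub, map_sum, C_eq_C_mul_T_zero]
  simp only [derivOneHom, AddMonoidHom.mk'_apply, derivOne_C_mul_T, sum_Ind_mul_w,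
    zero_mul, sub_self]

end GaussDiagram

-- `(Lk k).Chord` is `Fin (k + 1)` only after unfolding `Lk`; restating the sums over
-- `Fin (k + 1)` lets `simp` work with the `Fin` instances.
lemma Lk_Ind_zero (k : ℕ) : (Lk k).Ind (0 : Fin (k + 1)) = k := by
  change ∑ d ∈ univ.filter (fun d : Fin (k + 1) => (0 : Fin (k + 1)) = 0 ∧ d ≠ 0), (1 : ℤ)
    - ∑ d ∈ univ.filter (fun d : Fin (k + 1) => d = 0 ∧ (0 : Fin (k + 1)) ≠ 0), (1 : ℤ) = k
  simp [Finset.filter_ne']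

lemma Lk_Ind_succ (k : ℕ) (i : Fin k) : (Lk k).Ind i.succ = -1 := by
  change ∑ d ∈ univ.filter (fun d : Fin (k + 1) => i.succ = 0 ∧ d ≠ 0), (1 : ℤ)
    - ∑ d ∈ univ.filter (fun d : Fin (k + 1) => d = 0 ∧ i.succ ≠ 0), (1 : ℤ) = -1
  simp [Finset.filter_eq']

theorem Lk_W (k : ℕ) : (Lk k).W = T (k : ℤ) + C (k : ℤ) * T (-1) - C ((k : ℤ) + 1) := by
  change ∑ c : Fin (k + 1), C (1 : ℤ) * T ((Lk k).Ind c) - C (∑ _c : Fin (k + 1), (1 : ℤ)) = _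
  simp only [Fin.sum_univ_succ, Lk_Ind_zero, Lk_Ind_succ, map_one, one_mul, Finset.sum_const,
    Finset.card_univ, Fintype.card_fin, nsmul_eq_mul, mul_one, Nat.cast_add_one, ← map_natCast C]

/-- The writhe polynomial of `L_k` equals `t^k + k·t⁻¹ − (k+1)`; in particular it
vanishes at `t = 1` together with its derivative. -/
theorem writhePolynomial_Lk (k : ℕ) :
    (Lk k).W = T (k : ℤ) + C (k : ℤ) * T (-1) - C ((k : ℤ) + 1) ∧
    evalOne (Lk k).W = 0 ∧ derivOne (Lk k).W = 0 :=
  ⟨Lk_W k, (Lk k).evalOne_W, (Lk k).derivOne_W⟩
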